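/- arXiv:1303.2143 — 2 statements merged into one kernel-verified Lean document; each statement's English description precedes it below -/
import Mathlib

section
/- Let x, x', y, y', z, z' ∈ A* with c(x) ∪ c(z) ⊆ c(y) and c(x') ∪ c(z') ⊆ c(y') = c(y). Then for every n ∈ ℕ, x yⁿ z ∼ₙ x' y'ⁿ z'. -/
def Subw {A : Type*} (n : ℕ) (u : List A) : Set (List A) :=
  {w | w.length ≤ n ∧ w.Sublist u}

def simn {A : Type*} (n : ℕ) (u v : List A) : Prop := Subw n u = Subw n v

def content {A : Type*} (w : List A) : Set A := {a | a ∈ w}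

def listPow {A : Type*} (w : List A) (n : ℕ) : List A := (List.replicate n w).flatten

lemma listPow_add {A : Type*} (y : List A) (m k : ℕ) :
    listPow y (m + k) = listPow y m ++ listPow y k := by
  unfold listPow
  rw [List.replicate_add, List.flatten_append]

lemma sublist_listPow_self {A : Type*} {y w : List A} (h : ∀ a ∈ w, a ∈ y) :
    w.Sublist (listPow y w.length) := by
  induction w with
  | nil => simp [listPow]
  | cons a w ih =>
    have : listPow y (a :: w).length = y ++ listPow y w.length := by
      have : (a :: w).length = 1 + w.length := by simp [Nat.add_comm]
      rw [this, listPow_add]; simp [listPow]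
    rw [this]
    have ha : [a].Sublist y := List.singleton_sublist.mpr (h a (by simp))
    exact ha.append (ih fun b hb => h b (by simp [hb]))

lemma sublist_listPow_mono {A : Type*} (y : List A) {m k : ℕ} (h : m ≤ k) :
    (listPow y m).Sublist (listPow y k) := by
  obtain ⟨d, rfl⟩ := Nat.exists_eq_add_of_le h
  rw [listPow_add]
  exact List.sublist_append_left _ _

lemma Subw_char {A : Type*} (x y z : List A) (n : ℕ)
    (h1 : content x ∪ content z ⊆ content y) :
    Subw n (x ++ listPow y n ++ z) = {w | w.length ≤ n ∧ ∀ a ∈ w, a ∈ y} := by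
  ext w
  constructor
  · rintro ⟨hlen, hsub⟩
    refine ⟨hlen, fun a ha => ?_⟩
    have : a ∈ x ++ listPow y n ++ z := hsub.mem ha
    simp only [List.mem_append] at this
    rcases this with (hx | hy) | hz
    · exact h1 (Or.inl hx)
    · simp only [listPow, List.mem_flatten] at hy
      obtain ⟨l, hl, hal⟩ := hy
      rwa [List.eq_of_mem_replicate hl] at hal
    · exact h1 (Or.inr hz)
  · rintro ⟨hlen, hc⟩
    refine ⟨hlen, ?_⟩
    have h2 : w.Sublist (listPow y n) :=
      (sublist_listPow_self hc).trans (sublist_listPow_mono y hlen)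
    rw [List.append_assoc]
    exact h2.trans ((List.sublist_append_left _ z).trans
      (List.sublist_append_right x _))

/-- if `c(x) ∪ c(z) ⊆ c(y)` and `c(x') ∪ c(z') ⊆ c(y') = c(y)`,
then `x yⁿ z ∼ₙ x' y'ⁿ z'` for every `n`. -/
theorem claim_xyz {A : Type*} (x x' y y' z z' : List A)
    (h1 : content x ∪ content z ⊆ content y)
    (h2 : content x' ∪ content z' ⊆ content y')
    (h3 : content y' = content y) (n : ℕ) :
    simn n (x ++ listPow y n ++ z) (x' ++ listPow y' n ++ z') := by
  unfold simn
  rw [Subw_char x y z n h1, Subw_char x' y' z' n h2]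
  have : ∀ a : A, a ∈ y' ↔ a ∈ y := fun a => by
    have := Set.ext_iff.mp h3 a; simpa [content] using this
  ext w
  simp only [Set.mem_setOf_eq]
  exact and_congr_right fun _ => forall₂_congr fun a _ => (this a).symm
end

section
/- If two languages L₁ and L₂ are separable by a piecewise testable language, and L₁ contains a language of the form u₀(x₁y₁*z₁)u₁⋯u_{p−1}(x_p y_p* z_p)u_p while L₂ contains u₀(x₁'y₁'*z₁')u₁⋯u_{p−1}(x_p' y_p'* z_p')u_p, where c(xᵢ)∪c(zᵢ) ⊆ c(yᵢ) = Bᵢ and c(xᵢ')∪c(zᵢ') ⊆ c(yᵢ') = Bᵢ for nonempty Bᵢ, then a contradiction follows; i.e., such L₁, L₂ are not PT-separable. -/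
/-- `L` is piecewise testable: for some `n`, `L` is a union of `∼ₙ`-classes. -/
def IsPT {A : Type*} (L : Set (List A)) : Prop :=
  ∃ n : ℕ, ∀ u v : List A, u ∈ L → simn n u v → v ∈ L

/-- `L₁` and `L₂` are separable by a piecewise testable language. -/
def PTSeparable {A : Type*} (L₁ L₂ : Set (List A)) : Prop :=
  ∃ L : Set (List A), IsPT L ∧ L₁ ⊆ L ∧ L ∩ L₂ = ∅

/-- the language `u₀(x₁y₁*z₁)u₁⋯u_{p−1}(x_p y_p* z_p)u_p` -/
def starLang {A : Type*} (p : ℕ) (u : Fin (p + 1) → List A)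
    (x y z : Fin p → List A) : Set (List A) :=
  {w | ∃ k : Fin p → ℕ,
    w = (List.ofFn fun i : Fin p =>
      u i.castSucc ++ x i ++ listPow (y i) (k i) ++ z i).flatten ++ u (Fin.last p)}


lemma subw_append {A : Type*} (n : ℕ) (a b : List A) :
    Subw n (a ++ b) = {w | ∃ w₁ w₂, w = w₁ ++ w₂ ∧ w₁ ∈ Subw n a ∧ w₂ ∈ Subw n b ∧
      (w₁ ++ w₂).length ≤ n} := by
  ext w
  simp only [Subw, Set.mem_setOf_eq, List.sublist_append_iff]
  constructor
  · rintro ⟨hn, w₁, w₂, rfl, h₁, h₂⟩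
    refine ⟨w₁, w₂, rfl, ⟨?_, h₁⟩, ⟨?_, h₂⟩, hn⟩ <;>
      · simp only [List.length_append] at hn; omega
  · rintro ⟨w₁, w₂, rfl, ⟨_, h₁⟩, ⟨_, h₂⟩, hn⟩
    exact ⟨hn, w₁, w₂, rfl, h₁, h₂⟩

lemma simn_append {A : Type*} {n : ℕ} {a a' b b' : List A} (ha : simn n a a')
    (hb : simn n b b') : simn n (a ++ b) (a' ++ b') := by
  unfold simn at *
  rw [subw_append, subw_append, ha, hb]

lemma simn_flatten {A : Type*} {n : ℕ} {l₁ l₂ : List (List A)}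
    (h : List.Forall₂ (simn n) l₁ l₂) : simn n l₁.flatten l₂.flatten := by
  induction h with
  | nil => rfl
  | cons h _ ih => simpa using simn_append h ih

lemma sublist_listPow {A : Type*} {y : List A} :
    ∀ {w : List A}, content w ⊆ content y → w.Sublist (listPow y w.length)
  | [], _ => List.nil_sublist _
  | a :: w, hc => by
    have ha : a ∈ y := hc (by simp [content])
    have hw : w.Sublist (listPow y w.length) :=
      sublist_listPow (fun b hb => hc (by simp [content] at hb ⊢; exact Or.inr hb))
    have : listPow y (a :: w).length = y ++ listPow y w.length := by
      simp [listPow, List.replicate_succ]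
    rw [this]
    simpa using (List.singleton_sublist.mpr ha).append hw

lemma listPow_mono {A : Type*} {y : List A} {m n : ℕ} (h : m ≤ n) :
    (listPow y m).Sublist (listPow y n) := by
  obtain ⟨k, rfl⟩ := Nat.exists_eq_add_of_le h
  have : listPow y (m + k) = listPow y m ++ listPow y k := by
    rw [listPow, List.replicate_add, List.flatten_append]; rfl
  rw [this]
  exact List.sublist_append_left _ _

lemma content_listPow {A : Type*} (y : List A) (n : ℕ) : content (listPow y n) ⊆ content y := by
  intro a ha
  simp only [content, listPow, Set.mem_setOf_eq, List.mem_flatten] at ha ⊢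
  obtain ⟨l, hl, hal⟩ := ha
  rwa [List.eq_of_mem_replicate hl] at hal

lemma subw_star {A : Type*} (n : ℕ) {x y z : List A} (hx : content x ⊆ content y)
    (hz : content z ⊆ content y) :
    Subw n (x ++ (listPow y n ++ z)) = {w | w.length ≤ n ∧ content w ⊆ content y} := by
  ext w
  simp only [Subw, Set.mem_setOf_eq]
  constructor
  · rintro ⟨hl, hs⟩
    refine ⟨hl, fun a ha => ?_⟩
    have : a ∈ x ++ (listPow y n ++ z) := hs.subset ha
    simp only [List.mem_append] at this
    rcases this with h | h | h
    · exact hx h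
    · exact content_listPow y n h
    · exact hz h
  · rintro ⟨hl, hc⟩
    refine ⟨hl, ?_⟩
    have h1 : w.Sublist (listPow y n) :=
      (sublist_listPow hc).trans (listPow_mono hl)
    have h2 : (listPow y n).Sublist (x ++ (listPow y n ++ z)) :=
      (List.sublist_append_left _ _).trans (List.sublist_append_right _ _)
    exact h1.trans h2

/-- if `L₁` contains `u₀(x₁y₁*z₁)⋯u_p` and `L₂` contains
`u₀(x₁'y₁'*z₁')⋯u_p` with matching alphabet conditions, then `L₁, L₂` are not
PT-separable. -/
theorem not_PT_separable {A : Type*} (L₁ L₂ : Set (List A)) (p : ℕ)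
    (u : Fin (p + 1) → List A) (B : Fin p → Set A) (hB : ∀ i, (B i).Nonempty)
    (x y z x' y' z' : Fin p → List A)
    (h : ∀ i, content (x i) ∪ content (z i) ⊆ content (y i) ∧ content (y i) = B i)
    (h' : ∀ i, content (x' i) ∪ content (z' i) ⊆ content (y' i) ∧ content (y' i) = B i)
    (hL₁ : starLang p u x y z ⊆ L₁) (hL₂ : starLang p u x' y' z' ⊆ L₂)
    (hsep : PTSeparable L₁ L₂) : False := by
  obtain ⟨L, ⟨n, hn⟩, hsub, hdisj⟩ := hsep
  set w₁ := (List.ofFn fun i : Fin p =>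
      u i.castSucc ++ x i ++ listPow (y i) n ++ z i).flatten ++ u (Fin.last p) with hw₁def
  set w₂ := (List.ofFn fun i : Fin p =>
      u i.castSucc ++ x' i ++ listPow (y' i) n ++ z' i).flatten ++ u (Fin.last p) with hw₂def
  have hw₁ : w₁ ∈ starLang p u x y z := ⟨fun _ => n, rfl⟩
  have hw₂ : w₂ ∈ starLang p u x' y' z' := ⟨fun _ => n, rfl⟩
  have hsim : simn n w₁ w₂ := by
    refine simn_append (simn_flatten ?_) rfl
    rw [List.forall₂_iff_get]
    refine ⟨by simp, fun i h₁ h₂ => ?_⟩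
    simp only [List.get_eq_getElem, List.getElem_ofFn]
    have key : simn n
        (u (Fin.mk i (by simpa using h₁)).castSucc ++
          (x ⟨i, by simpa using h₁⟩ ++ (listPow (y ⟨i, by simpa using h₁⟩) n ++ z ⟨i, by simpa using h₁⟩)))
        (u (Fin.mk i (by simpa using h₁)).castSucc ++
          (x' ⟨i, by simpa using h₁⟩ ++ (listPow (y' ⟨i, by simpa using h₁⟩) n ++ z' ⟨i, by simpa using h₁⟩))) := by
      set j : Fin p := ⟨i, by simpa using h₁⟩
      refine simn_append rfl ?_
      unfold simn
      rw [subw_star n (fun a ha => (h j).1 (Or.inl ha)) (fun a ha => (h j).1 (Or.inr ha)),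
        subw_star n (fun a ha => (h' j).1 (Or.inl ha)) (fun a ha => (h' j).1 (Or.inr ha)),
        (h j).2, (h' j).2]
    simpa only [List.append_assoc] using key
  have hmem₁ : w₁ ∈ L := hsub (hL₁ hw₁)
  have hmem₂ : w₂ ∈ L := hn w₁ w₂ hmem₁ hsim
  exact Set.eq_empty_iff_forall_notMem.mp hdisj w₂ ⟨hmem₂, hL₂ hw₂⟩
end
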